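/- Let S be a hereditarily closed set of pregames. Then every position G ∈ S is a number (numeric) if and only if there is no position G ∈ S and no number x such that G + x is a first-player win (i.e., G + x is fuzzy with 0). -/

import Mathlib

namespace SetTheory

universe u

/-- Pre-games, as in Mathlib (December 2024), which has since removed them. -/
inductive PGame : Type (u + 1)
  | mk : ∀ α β : Type u, (α → PGame) → (β → PGame) → PGame

namespace PGame

def LeftMoves : PGame → Type u
  | mk l _ _ _ => l

def RightMoves : PGame → Type u
  | mk _ r _ _ => r

def moveLeft : ∀ g : PGame, LeftMoves g → PGame
  | mk _l _ L _ => L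

def moveRight : ∀ g : PGame, RightMoves g → PGame
  | mk _ _r _ R => R

/-- Simultaneous definition of `≤` (first component) and `⧏` (second component). -/
noncomputable def leLF (x : PGame.{u}) : PGame.{u} → Prop × Prop := by
  induction x with | mk xl xr xL xR IHxl IHxr => ?_
  intro y
  induction y with | mk yl yr yL yR IHyl IHyr => ?_
  exact ((∀ i, (IHxl i (mk yl yr yL yR)).2) ∧ ∀ j, (IHyr j).2,
    (∃ j, (IHyl j).1) ∨ ∃ i, (IHxr i (mk yl yr yL yR)).1)

instance : LE PGame.{u} := ⟨fun x y => (leLF x y).1⟩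

instance : LT PGame.{u} := ⟨fun x y => x ≤ y ∧ ¬y ≤ x⟩

instance : Zero PGame.{u} := ⟨⟨PEmpty, PEmpty, PEmpty.elim, PEmpty.elim⟩⟩

noncomputable instance : Add PGame.{u} :=
  ⟨fun x y => by
    induction x generalizing y with | mk xl xr _ _ IHxl IHxr => _
    induction y with | mk yl yr yL yR IHyl IHyr => _
    have y := mk yl yr yL yR
    refine ⟨xl ⊕ yl, xr ⊕ yr, Sum.rec ?_ ?_, Sum.rec ?_ ?_⟩
    · exact fun i => IHxl i y
    · exact IHyl
    · exact fun i => IHxr i y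
    · exact IHyr⟩

def Fuzzy (x y : PGame) : Prop :=
  ¬y ≤ x ∧ ¬x ≤ y

scoped infixl:50 " ‖ " => PGame.Fuzzy

def Numeric : PGame → Prop
  | ⟨_, _, L, R⟩ => (∀ i j, L i < R j) ∧ (∀ i, Numeric (L i)) ∧ ∀ j, Numeric (R j)

end PGame

end SetTheory

open SetTheory PGame

/-- A set of pregames is hereditarily closed (HCR) if it is closed under taking
left and right options. -/
def HCR (S : Set PGame) : Prop :=
  ∀ G ∈ S, (∀ i, G.moveLeft i ∈ S) ∧ ∀ j, G.moveRight j ∈ S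

/-- The pair `(xL, xR)` satisfies the F1 property if some left option of `xR` is `≥ xL`,
or some right option of `xL` is `≤ xR`. -/
def F1 (xL xR : PGame) : Prop :=
  (∃ i, xL ≤ xR.moveLeft i) ∨ ∃ j, xL.moveRight j ≤ xR

/-- The pair `(xL, xR)` satisfies the F2 property if some right option of `xL` is `≤`
some left option of `xR`. -/
def F2 (xL xR : PGame) : Prop :=
  ∃ (j : xL.RightMoves) (i : xR.LeftMoves), xL.moveRight j ≤ xR.moveLeft i

namespace SetTheory

namespace PGame

universe u

theorem mk_le_mk_raw {xl xr : Type u} {xL : xl → PGame.{u}} {xR : xr → PGame.{u}}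
    {yl yr : Type u} {yL : yl → PGame.{u}} {yR : yr → PGame.{u}} :
    mk xl xr xL xR ≤ mk yl yr yL yR ↔
      (∀ i, (leLF (xL i) (mk yl yr yL yR)).2) ∧ ∀ j, (leLF (mk xl xr xL xR) (yR j)).2 := Iff.rfl

theorem mk_lf_raw {xl xr : Type u} {xL : xl → PGame.{u}} {xR : xr → PGame.{u}}
    {yl yr : Type u} {yL : yl → PGame.{u}} {yR : yr → PGame.{u}} :
    (leLF (mk xl xr xL xR) (mk yl yr yL yR)).2 ↔
      (∃ j, mk xl xr xL xR ≤ yL j) ∨ ∃ i, xR i ≤ mk yl yr yL yR := Iff.rfl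

theorem lf_iff_aux (x : PGame.{u}) : ∀ y : PGame.{u},
    ((leLF x y).2 ↔ ¬ y ≤ x) ∧ ((leLF y x).2 ↔ ¬ x ≤ y) := by
  induction x with
  | mk xl xr xL xR IHl IHr =>
  intro y
  induction y with
  | mk yl yr yL yR JHl JHr =>
  have h1 : ∀ i, (leLF (yL i) (mk xl xr xL xR)).2 ↔ ¬ mk xl xr xL xR ≤ yL i :=
    fun i => (JHl i).2
  have h2 : ∀ j, (leLF (mk yl yr yL yR) (xR j)).2 ↔ ¬ xR j ≤ mk yl yr yL yR :=
    fun j => (IHr j _).2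
  have h3 : ∀ i, (leLF (xL i) (mk yl yr yL yR)).2 ↔ ¬ mk yl yr yL yR ≤ xL i :=
    fun i => (IHl i _).1
  have h4 : ∀ j, (leLF (mk xl xr xL xR) (yR j)).2 ↔ ¬ yR j ≤ mk xl xr xL xR :=
    fun j => (JHr j).1
  constructor
  · rw [mk_lf_raw, mk_le_mk_raw]
    simp only [h1, h2, not_and_or, not_forall, not_not]
  · rw [mk_lf_raw, mk_le_mk_raw]
    simp only [h3, h4, not_and_or, not_forall, not_not]

theorem mk_le_mk {xl xr : Type u} {xL : xl → PGame.{u}} {xR : xr → PGame.{u}}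
    {yl yr : Type u} {yL : yl → PGame.{u}} {yR : yr → PGame.{u}} :
    mk xl xr xL xR ≤ mk yl yr yL yR ↔
      (∀ i, ¬ mk yl yr yL yR ≤ xL i) ∧ ∀ j, ¬ yR j ≤ mk xl xr xL xR := by
  have h : ∀ a b : PGame.{u}, (leLF a b).2 ↔ ¬ b ≤ a := fun a b => (lf_iff_aux a b).1
  rw [mk_le_mk_raw]
  exact and_congr (forall_congr' fun i => h _ _) (forall_congr' fun j => h _ _)

theorem pg_le_def {x y : PGame.{u}} :
    x ≤ y ↔ (∀ i, ¬ y ≤ x.moveLeft i) ∧ ∀ j, ¬ y.moveRight j ≤ x := by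
  cases x; cases y; exact mk_le_mk

theorem pg_le_refl (x : PGame.{u}) : x ≤ x := by
  induction x with
  | mk xl xr xL xR IHl IHr =>
  rw [mk_le_mk]
  refine ⟨fun i h => ?_, fun j h => ?_⟩
  · exact (pg_le_def.1 h).1 i (IHl i)
  · exact (pg_le_def.1 h).2 j (IHr j)

theorem pg_moveLeft_lf (x : PGame.{u}) (i : x.LeftMoves) : ¬ x ≤ x.moveLeft i :=
  fun h => (pg_le_def.1 h).1 i (pg_le_refl _)

theorem pg_lf_moveRight (x : PGame.{u}) (j : x.RightMoves) : ¬ x.moveRight j ≤ x :=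
  fun h => (pg_le_def.1 h).2 j (pg_le_refl _)

theorem le_trans_aux (x : PGame.{u}) : ∀ y z : PGame.{u},
    (x ≤ y → y ≤ z → x ≤ z) ∧ (y ≤ z → z ≤ x → y ≤ x) ∧ (z ≤ x → x ≤ y → z ≤ y) := by
  induction x with
  | mk xl xr xL xR IHxl IHxr =>
  intro y
  induction y with
  | mk yl yr yL yR IHyl IHyr =>
  intro z
  induction z with
  | mk zl zr zL zR IHzl IHzr =>
  refine ⟨fun h1 h2 => ?_, fun h1 h2 => ?_, fun h1 h2 => ?_⟩
  · refine mk_le_mk.2 ⟨fun i h => ?_, fun j h => ?_⟩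
    · exact (mk_le_mk.1 h1).1 i ((IHxl i _ _).2.1 h2 h)
    · exact (mk_le_mk.1 h2).2 j ((IHzr j).2.2 h h1)
  · refine mk_le_mk.2 ⟨fun i h => ?_, fun j h => ?_⟩
    · exact (mk_le_mk.1 h1).1 i ((IHyl i _).2.2 h2 h)
    · exact (mk_le_mk.1 h2).2 j ((IHxr j _ _).1 h h1)
  · refine mk_le_mk.2 ⟨fun i h => ?_, fun j h => ?_⟩
    · exact (mk_le_mk.1 h1).1 i ((IHzl i).1 h2 h)
    · exact (mk_le_mk.1 h2).2 j ((IHyr j _).2.1 h h1)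

theorem pg_le_trans {x y z : PGame.{u}} (h1 : x ≤ y) (h2 : y ≤ z) : x ≤ z :=
  (le_trans_aux x y z).1 h1 h2

theorem left_lf_add (x y : PGame.{u}) (i : x.LeftMoves) : ¬ x + y ≤ x.moveLeft i + y := by
  obtain ⟨xl, xr, xL, xR⟩ := x
  obtain ⟨yl, yr, yL, yR⟩ := y
  exact pg_moveLeft_lf (mk xl xr xL xR + mk yl yr yL yR) (Sum.inl i)

theorem left_lf_add' (x y : PGame.{u}) (i : y.LeftMoves) : ¬ x + y ≤ x + y.moveLeft i := by
  obtain ⟨xl, xr, xL, xR⟩ := x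
  obtain ⟨yl, yr, yL, yR⟩ := y
  exact pg_moveLeft_lf (mk xl xr xL xR + mk yl yr yL yR) (Sum.inr i)

theorem right_lf_add (x y : PGame.{u}) (j : x.RightMoves) : ¬ x.moveRight j + y ≤ x + y := by
  obtain ⟨xl, xr, xL, xR⟩ := x
  obtain ⟨yl, yr, yL, yR⟩ := y
  exact pg_lf_moveRight (mk xl xr xL xR + mk yl yr yL yR) (Sum.inl j)

theorem right_lf_add' (x y : PGame.{u}) (j : y.RightMoves) : ¬ x + y.moveRight j ≤ x + y := by
  obtain ⟨xl, xr, xL, xR⟩ := x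
  obtain ⟨yl, yr, yL, yR⟩ := y
  exact pg_lf_moveRight (mk xl xr xL xR + mk yl yr yL yR) (Sum.inr j)

theorem add_right_aux (x : PGame.{u}) : ∀ y z : PGame.{u},
    (x ≤ y → x + z ≤ y + z) ∧ (¬ y ≤ x → ¬ y + z ≤ x + z) := by
  induction x with
  | mk xl xr xL xR IHxl IHxr =>
  intro y
  induction y with
  | mk yl yr yL yR IHyl IHyr =>
  intro z
  induction z with
  | mk zl zr zL zR IHzl IHzr =>
  constructor
  · intro h
    have h' := mk_le_mk.1 h
    rw [pg_le_def]
    refine ⟨?_, ?_⟩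
    · rintro (i | k)
      · exact (IHxl i _ _).2 (h'.1 i)
      · exact fun h2 => left_lf_add' (mk yl yr yL yR) (mk zl zr zL zR) k (pg_le_trans h2 ((IHzl k).1 h))
    · rintro (j | k)
      · exact (IHyr j _).2 (h'.2 j)
      · exact fun h2 => right_lf_add' (mk xl xr xL xR) (mk zl zr zL zR) k (pg_le_trans ((IHzr k).1 h) h2)
  · intro h h2
    rw [mk_le_mk] at h
    simp only [not_and_or, not_forall, not_not] at h
    rcases h with ⟨i, hi⟩ | ⟨j, hj⟩
    · exact left_lf_add (mk yl yr yL yR) (mk zl zr zL zR) i (pg_le_trans h2 ((IHyl i _).1 hi))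
    · exact right_lf_add (mk xl xr xL xR) (mk zl zr zL zR) j (pg_le_trans ((IHxr j _ _).1 hj) h2)

theorem add_left_aux (x : PGame.{u}) : ∀ y z : PGame.{u},
    (x ≤ y → z + x ≤ z + y) ∧ (¬ y ≤ x → ¬ z + y ≤ z + x) := by
  induction x with
  | mk xl xr xL xR IHxl IHxr =>
  intro y
  induction y with
  | mk yl yr yL yR IHyl IHyr =>
  intro z
  induction z with
  | mk zl zr zL zR IHzl IHzr =>
  constructor
  · intro h
    have h' := mk_le_mk.1 h
    rw [pg_le_def]
    refine ⟨?_, ?_⟩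
    · rintro (k | i)
      · exact fun h2 => left_lf_add (mk zl zr zL zR) (mk yl yr yL yR) k (pg_le_trans h2 ((IHzl k).1 h))
      · exact (IHxl i _ _).2 (h'.1 i)
    · rintro (k | j)
      · exact fun h2 => right_lf_add (mk zl zr zL zR) (mk xl xr xL xR) k (pg_le_trans ((IHzr k).1 h) h2)
      · exact (IHyr j (mk zl zr zL zR)).2 (h'.2 j)
  · intro h h2
    rw [mk_le_mk] at h
    simp only [not_and_or, not_forall, not_not] at h
    rcases h with ⟨i, hi⟩ | ⟨j, hj⟩
    · exact left_lf_add' (mk zl zr zL zR) (mk yl yr yL yR) i (pg_le_trans h2 ((IHyl i _).1 hi))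
    · exact right_lf_add' (mk zl zr zL zR) (mk xl xr xL xR) j (pg_le_trans ((IHxr j _ _).1 hj) h2)

noncomputable def pgNeg : PGame.{u} → PGame.{u} :=
  fun x => @PGame.rec (fun _ => PGame.{u}) (fun l r _ _ IL IR => mk r l IR IL) x

theorem add_neg_aux (a : PGame.{u}) : a + pgNeg a ≤ 0 ∧ 0 ≤ a + pgNeg a := by
  induction a with
  | mk l r L R IHl IHr =>
  constructor
  · rw [pg_le_def]
    refine ⟨?_, fun j => PEmpty.elim j⟩
    rintro (i | j) h
    · exact right_lf_add' (L i) (pgNeg (mk l r L R)) i (pg_le_trans (IHl i).1 h)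
    · exact right_lf_add (mk l r L R) (pgNeg (R j)) j (pg_le_trans (IHr j).1 h)
  · rw [pg_le_def]
    refine ⟨fun i => PEmpty.elim i, ?_⟩
    rintro (j | i) h
    · exact left_lf_add' (R j) (pgNeg (mk l r L R)) j (pg_le_trans h (IHr j).2)
    · exact left_lf_add (mk l r L R) (pgNeg (L i)) i (pg_le_trans h (IHl i).2)

theorem neg_le_aux (x : PGame.{u}) : ∀ y : PGame.{u},
    (pgNeg y ≤ pgNeg x ↔ x ≤ y) ∧ (pgNeg x ≤ pgNeg y ↔ y ≤ x) := by
  induction x with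
  | mk xl xr xL xR IHl IHr =>
  intro y
  induction y with
  | mk yl yr yL yR JHl JHr =>
  have e1 : pgNeg (mk yl yr yL yR) ≤ pgNeg (mk xl xr xL xR) ↔
      (∀ j, ¬ pgNeg (mk xl xr xL xR) ≤ pgNeg (yR j)) ∧
        ∀ i, ¬ pgNeg (xL i) ≤ pgNeg (mk yl yr yL yR) := mk_le_mk
  have e2 : pgNeg (mk xl xr xL xR) ≤ pgNeg (mk yl yr yL yR) ↔
      (∀ j, ¬ pgNeg (mk yl yr yL yR) ≤ pgNeg (xR j)) ∧
        ∀ i, ¬ pgNeg (yL i) ≤ pgNeg (mk xl xr xL xR) := mk_le_mk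
  have e3 : mk xl xr xL xR ≤ mk yl yr yL yR ↔
      (∀ i, ¬ mk yl yr yL yR ≤ xL i) ∧ ∀ j, ¬ yR j ≤ mk xl xr xL xR := mk_le_mk
  have e4 : mk yl yr yL yR ≤ mk xl xr xL xR ↔
      (∀ i, ¬ mk xl xr xL xR ≤ yL i) ∧ ∀ j, ¬ xR j ≤ mk yl yr yL yR := mk_le_mk
  rw [e1, e2, e3, e4]
  constructor
  · constructor
    · rintro ⟨h1, h2⟩
      exact ⟨fun i hi => h2 i ((IHl i _).2.2 hi), fun j hj => h1 j ((JHr j).2.2 hj)⟩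
    · rintro ⟨h1, h2⟩
      exact ⟨fun j hj => h2 j ((JHr j).2.1 hj), fun i hi => h1 i ((IHl i _).2.1 hi)⟩
  · constructor
    · rintro ⟨h1, h2⟩
      exact ⟨fun i hi => h2 i ((JHl i).1.2 hi), fun j hj => h1 j ((IHr j _).1.2 hj)⟩
    · rintro ⟨h1, h2⟩
      exact ⟨fun j hj => h2 j ((IHr j _).1.1 hj), fun i hi => h1 i ((JHl i).1.1 hi)⟩

theorem numeric_mk {l r : Type u} {L : l → PGame.{u}} {R : r → PGame.{u}} :
    Numeric (mk l r L R) ↔ (∀ i j, L i < R j) ∧ (∀ i, Numeric (L i)) ∧ ∀ j, Numeric (R j) := by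
  rw [Numeric]

theorem numeric_neg (x : PGame.{u}) : Numeric x → Numeric (pgNeg x) := by
  induction x with
  | mk l r L R IHl IHr =>
  intro ox
  rw [numeric_mk] at ox
  show Numeric (mk r l (fun j => pgNeg (R j)) (fun i => pgNeg (L i)))
  rw [numeric_mk]
  refine ⟨fun j i => ⟨(neg_le_aux (L i) (R j)).1.2 (ox.1 i j).1,
    fun h => (ox.1 i j).2 ((neg_le_aux (L i) (R j)).2.1 h)⟩,
    fun j => IHr j (ox.2.2 j), fun i => IHl i (ox.2.1 i)⟩

theorem numeric_asym (x : PGame.{u}) : ∀ y : PGame.{u}, Numeric x → Numeric y → ¬ y ≤ x → x ≤ y := by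
  induction x with
  | mk xl xr xL xR IHl IHr =>
  intro y ox oy h1
  obtain ⟨yl, yr, yL, yR⟩ := y
  by_contra h2
  rw [mk_le_mk] at h1 h2
  simp only [not_and_or, not_forall, not_not] at h1 h2
  rw [numeric_mk] at ox oy
  rcases h1 with ⟨i, hi⟩ | ⟨j, hj⟩ <;> rcases h2 with ⟨k, hk⟩ | ⟨l, hl⟩
  · exact (pg_le_def.1 hk).1 i (IHl k (yL i) (ox.2.1 k) (oy.2.1 i) ((pg_le_def.1 hi).1 k))
  · exact (oy.1 i l).2 (pg_le_trans hl hi)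
  · exact (ox.1 k j).2 (pg_le_trans hj hk)
  · exact (pg_le_def.1 hl).2 j (IHr j (yR l) (ox.2.2 j) (oy.2.2 l) ((pg_le_def.1 hj).2 l))

theorem numeric_le_total {x y : PGame.{u}} (ox : Numeric x) (oy : Numeric y) :
    x ≤ y ∨ y ≤ x := by
  by_cases h : y ≤ x
  · exact Or.inr h
  · exact Or.inl (numeric_asym x y ox oy h)

theorem numeric_zero' : Numeric (0 : PGame.{u}) := by
  show Numeric (mk PEmpty PEmpty PEmpty.elim PEmpty.elim)
  rw [numeric_mk]
  exact ⟨fun i => PEmpty.elim i, fun i => PEmpty.elim i, fun i => PEmpty.elim i⟩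

theorem numeric_add (x : PGame.{u}) : ∀ y : PGame.{u}, Numeric x → Numeric y → Numeric (x + y) := by
  induction x with
  | mk xl xr xL xR IHl IHr =>
  intro y
  induction y with
  | mk yl yr yL yR JHl JHr =>
  intro ox oy
  have ox' := numeric_mk.1 ox
  have oy' := numeric_mk.1 oy
  refine numeric_mk.2 ⟨?_, ?_, ?_⟩
  · rintro (i | i) (j | j)
    · exact ⟨(add_right_aux (xL i) (xR j) (mk yl yr yL yR)).1 (ox'.1 i j).1,
        (add_right_aux (xL i) (xR j) (mk yl yr yL yR)).2 (ox'.1 i j).2⟩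
    · have lf : ¬ mk xl xr xL xR + yR j ≤ xL i + mk yl yr yL yR := fun h =>
        (add_right_aux (xL i) (mk xl xr xL xR) (mk yl yr yL yR)).2
          (pg_moveLeft_lf (mk xl xr xL xR) i)
          (pg_le_trans ((add_left_aux (mk yl yr yL yR) (yR j) (mk xl xr xL xR)).1
            (numeric_asym (mk yl yr yL yR) (yR j) oy (oy'.2.2 j)
              (pg_lf_moveRight (mk yl yr yL yR) j))) h)
      exact ⟨numeric_asym _ _ (IHl i _ (ox'.2.1 i) oy) (JHr j ox (oy'.2.2 j)) lf, lf⟩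
    · have lf : ¬ xR j + mk yl yr yL yR ≤ mk xl xr xL xR + yL i := fun h =>
        (add_right_aux (mk xl xr xL xR) (xR j) (mk yl yr yL yR)).2
          (pg_lf_moveRight (mk xl xr xL xR) j)
          (pg_le_trans h ((add_left_aux (yL i) (mk yl yr yL yR) (mk xl xr xL xR)).1
            (numeric_asym (yL i) (mk yl yr yL yR) (oy'.2.1 i) oy
              (pg_moveLeft_lf (mk yl yr yL yR) i))))
      exact ⟨numeric_asym _ _ (JHl i ox (oy'.2.1 i)) (IHr j _ (ox'.2.2 j) oy) lf, lf⟩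
    · exact ⟨(add_left_aux (yL i) (yR j) (mk xl xr xL xR)).1 (oy'.1 i j).1,
        (add_left_aux (yL i) (yR j) (mk xl xr xL xR)).2 (oy'.1 i j).2⟩
  · rintro (i | i)
    · exact IHl i _ (ox'.2.1 i) oy
    · exact JHl i ox (oy'.2.1 i)
  · rintro (j | j)
    · exact IHr j _ (ox'.2.2 j) oy
    · exact JHr j ox (oy'.2.2 j)

end PGame

end SetTheory

theorem stmt_0 (S : Set PGame) (hS : HCR S) :
    (∀ G ∈ S, G.Numeric) ↔
      ¬∃ G ∈ S, ∃ x : PGame, x.Numeric ∧ (G + x) ‖ 0 := by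
  constructor
  · rintro h ⟨G, hG, x, hx, hf⟩
    obtain ⟨f1, f2⟩ := hf
    rcases numeric_le_total (numeric_add G x (h G hG) hx) numeric_zero' with h1 | h1
    · exact f2 h1
    · exact f1 h1
  · intro h G hG
    induction G with
    | mk l r L R IHl IHr =>
    have hl : ∀ i, (L i).Numeric := fun i => IHl i ((hS _ hG).1 i)
    have hr : ∀ j, (R j).Numeric := fun j => IHr j ((hS _ hG).2 j)
    refine numeric_mk.2 ⟨fun i j => ?_, hl, hr⟩
    by_contra hlt
    have hle : R j ≤ L i := by
      by_contra h'
      exact hlt ⟨numeric_asym (L i) (R j) (hl i) (hr j) h', h'⟩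
    apply h
    refine ⟨mk l r L R, hG, pgNeg (R j), numeric_neg _ (hr j), ?_⟩
    refine ⟨fun h0 => ?_, fun h0 => ?_⟩
    · exact right_lf_add (mk l r L R) (pgNeg (R j)) j (pg_le_trans (add_neg_aux (R j)).1 h0)
    · exact left_lf_add (mk l r L R) (pgNeg (R j)) i (pg_le_trans h0
        (pg_le_trans (add_neg_aux (R j)).2
          ((add_right_aux (R j) (L i) (pgNeg (R j))).1 hle)))
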